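/- arXiv:2103.00729 — 4 statements merged into one kernel-verified Lean document; each statement's English description precedes it below -/
import Mathlib

section
/- In a binary-conflict-free net, if σt and σu are both firing sequences with t ≠ u, then σtu and σut are also firing sequences and they lead to the same marking. -/
structure Net (S T : Type) where
  pre : T → S → ℕ
  post : T → S → ℕ
  M0 : S → ℕ

namespace Net

variable {S T : Type}

/-- `t` is enabled in marking `M`: all tokens in its preplaces are available. -/
def enabled (N : Net S T) (t : T) (M : S → ℕ) : Prop := ∀ s, N.pre t s ≤ M s

/-- The marking obtained by firing `t` from `M`. -/
def fire (N : Net S T) (M : S → ℕ) (t : T) : S → ℕ :=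
  fun s => M s - N.pre t s + N.post t s

/-- `Fires N M σ M'` : the word `σ` of transitions can fire from `M`, leading to `M'`. -/
inductive Fires (N : Net S T) : (S → ℕ) → List T → (S → ℕ) → Prop
  | nil (M : S → ℕ) : Fires N M [] M
  | cons {M M' : S → ℕ} {t : T} {σ : List T} (h : N.enabled t M)
      (h' : Fires N (N.fire M t) σ M') : Fires N M (t :: σ) M'

/-- `σ` is a firing sequence of `N`. -/
def FS (N : Net S T) (σ : List T) : Prop := ∃ M, N.Fires N.M0 σ M

/-- `M` is reachable from the initial marking. -/
def Reachable (N : Net S T) (M : S → ℕ) : Prop := ∃ σ, N.Fires N.M0 σ M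

/-- The step (multiset) `{t,u}` is enabled in `M`. -/
def enabledPair (N : Net S T) (t u : T) (M : S → ℕ) : Prop :=
  ∀ s, N.pre t s + N.pre u s ≤ M s

/-- Binary-conflict-freeness. -/
def bcf (N : Net S T) : Prop :=
  ∀ M, N.Reachable M → ∀ t u, t ≠ u → N.enabled t M → N.enabled u M → N.enabledPair t u M

/-- Adjacency of firing sequences: exchange of two consecutive transitions forming an enabled step. -/
def Adjacent (N : Net S T) (σ ρ : List T) : Prop :=
  N.FS σ ∧ N.FS ρ ∧ ∃ σ₁ t u σ₂ M, σ = σ₁ ++ t :: u :: σ₂ ∧ ρ = σ₁ ++ u :: t :: σ₂ ∧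
    N.Fires N.M0 σ₁ M ∧ N.enabledPair t u M

/-- Reflexive-transitive closure of adjacency. -/
def AdjStar (N : Net S T) : List T → List T → Prop := Relation.ReflTransGen N.Adjacent

/-- Prefix relation on partial FS-runs, on representatives: `[σ] ≤ [ρ]`. -/
def runLe (N : Net S T) (σ ρ : List T) : Prop := ∃ μ, σ <+: μ ∧ N.AdjStar μ ρ

end Net

theorem fires_det {S T : Type} {N : Net S T} {M M1 M2 : S → ℕ} {σ : List T}
    (h1 : N.Fires M σ M1) (h2 : N.Fires M σ M2) : M1 = M2 := by
  induction h1 generalizing M2 with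
  | nil => cases h2; rfl
  | cons h h' ih => cases h2 with | cons _ h2' => exact ih h2'

theorem fires_append {S T : Type} {N : Net S T} {M M1 M2 : S → ℕ} {σ ρ : List T}
    (h1 : N.Fires M σ M1) (h2 : N.Fires M1 ρ M2) : N.Fires M (σ ++ ρ) M2 := by
  induction h1 with
  | nil => exact h2
  | cons h h' ih => exact Net.Fires.cons h (ih h2)

theorem fires_split {S T : Type} {N : Net S T} {M M2 : S → ℕ} {σ ρ : List T}
    (h : N.Fires M (σ ++ ρ) M2) : ∃ M1, N.Fires M σ M1 ∧ N.Fires M1 ρ M2 := by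
  induction σ generalizing M with
  | nil => exact ⟨M, Net.Fires.nil M, h⟩
  | cons a σ ih =>
    cases h with
    | cons ha h' =>
      obtain ⟨M1, hs, hr⟩ := ih h'
      exact ⟨M1, Net.Fires.cons ha hs, hr⟩

/-- in a binary-conflict-free net, if `σt` and `σu` are firing sequences
with `t ≠ u`, then `σtu` and `σut` are firing sequences leading to the same marking. -/
theorem stmt2 {S T : Type} (N : Net S T) (hbcf : N.bcf) (σ : List T) (t u : T)
    (htu : t ≠ u) (h1 : N.FS (σ ++ [t])) (h2 : N.FS (σ ++ [u])) :
    ∃ M, N.Fires N.M0 (σ ++ [t, u]) M ∧ N.Fires N.M0 (σ ++ [u, t]) M := by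
  obtain ⟨M1, hf1⟩ := h1
  obtain ⟨M2, hf2⟩ := h2
  obtain ⟨Ma, hσa, hta⟩ := fires_split hf1
  obtain ⟨Mb, hσb, htb⟩ := fires_split hf2
  have hMab : Ma = Mb := fires_det hσa hσb
  subst hMab
  cases hta with
  | cons ht h' =>
    cases htb with
    | cons hu h'' =>
      have hpair := hbcf Ma ⟨σ, hσa⟩ t u htu ht hu
      have hut : N.enabled u (N.fire Ma t) := fun s => by
        have := hpair s; simp [Net.fire]; omega
      have htu' : N.enabled t (N.fire Ma u) := fun s => by
        have := hpair s; simp [Net.fire]; omega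
      refine ⟨N.fire (N.fire Ma t) u, fires_append hσa ?_, ?_⟩
      · exact Net.Fires.cons ht (Net.Fires.cons hut (Net.Fires.nil _))
      · have hcomm : N.fire (N.fire Ma t) u = N.fire (N.fire Ma u) t := by
          funext s; have := hpair s; simp [Net.fire]; omega
        rw [hcomm]
        exact fires_append hσa
          (Net.Fires.cons hu (Net.Fires.cons htu' (Net.Fires.nil _)))
end

section
/- In a binary-conflict-free net, if σt is a firing sequence, σρ is a firing sequence, and transition t does not occur in the word ρ, then σtρ and σρt are firing sequences leading to the same final marking. -/
namespace Net

variable {S T : Type}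

lemma fires_det {N : Net S T} {M M₁ M₂ : S → ℕ} {σ : List T}
    (h1 : N.Fires M σ M₁) (h2 : N.Fires M σ M₂) : M₁ = M₂ := by
  induction h1 generalizing M₂ with
  | nil _ => cases h2; rfl
  | cons h h' ih => cases h2 with | cons g g' => exact ih g'

lemma fires_split {N : Net S T} {M M'' : S → ℕ} {σ ρ : List T}
    (h : N.Fires M (σ ++ ρ) M'') : ∃ M', N.Fires M σ M' ∧ N.Fires M' ρ M'' := by
  induction σ generalizing M with
  | nil => exact ⟨M, Fires.nil M, h⟩
  | cons a σ ih =>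
    cases h with
    | cons ha h' =>
      obtain ⟨M', g1, g2⟩ := ih h'
      exact ⟨M', Fires.cons ha g1, g2⟩

lemma fires_append {N : Net S T} {M M' M'' : S → ℕ} {σ ρ : List T}
    (h1 : N.Fires M σ M') (h2 : N.Fires M' ρ M'') : N.Fires M (σ ++ ρ) M'' := by
  induction h1 with
  | nil => exact h2
  | cons ha _ ih => exact Fires.cons ha (ih h2)

lemma reachable_fire {N : Net S T} {M : S → ℕ} {u : T} (hu : N.enabled u M)
    (h : N.Reachable M) : N.Reachable (N.fire M u) := by
  obtain ⟨σ, hσ⟩ := h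
  exact ⟨σ ++ [u], fires_append hσ (Fires.cons hu (Fires.nil _))⟩

lemma key {N : Net S T} (hbcf : N.bcf) (t : T) :
    ∀ ρ : List T, ∀ M M' : S → ℕ, N.Reachable M → N.enabled t M →
      N.Fires M ρ M' → t ∉ ρ →
      N.enabled t M' ∧ N.Fires (N.fire M t) ρ (N.fire M' t) := by
  intro ρ
  induction ρ with
  | nil => intro M M' _ ht h _; cases h; exact ⟨ht, Fires.nil _⟩
  | cons u ρ ih =>
    intro M M' hreach ht h hnot
    have htu : t ≠ u := fun e => hnot (e ▸ List.mem_cons_self)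
    cases h with
    | cons hu h' =>
      have hpair : N.enabledPair t u M := hbcf M hreach t u htu ht hu
      have ht' : N.enabled t (N.fire M u) := by
        intro s; have := hpair s; unfold fire; omega
      have hrec : N.Reachable (N.fire M u) := reachable_fire hu hreach
      obtain ⟨he, hf⟩ := ih (N.fire M u) M' hrec ht' h'
        (fun hm => hnot (List.mem_cons_of_mem _ hm))
      refine ⟨he, ?_⟩
      have hu' : N.enabled u (N.fire M t) := by
        intro s; have := hpair s; unfold fire; omega
      have hcomm : N.fire (N.fire M t) u = N.fire (N.fire M u) t := by
        funext s; have := hpair s; unfold fire; omega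
      exact Fires.cons hu' (hcomm ▸ hf)

end Net

/-- in a binary-conflict-free net, if `σt` and `σρ` are firing sequences
and `t` does not occur in `ρ`, then `σtρ` and `σρt` are firing sequences leading to the
same final marking. -/
theorem stmt3 {S T : Type} (N : Net S T) (hbcf : N.bcf) (σ ρ : List T) (t : T)
    (h1 : N.FS (σ ++ [t])) (h2 : N.FS (σ ++ ρ)) (ht : t ∉ ρ) :
    ∃ M, N.Fires N.M0 (σ ++ t :: ρ) M ∧ N.Fires N.M0 (σ ++ ρ ++ [t]) M := by
  obtain ⟨M1, hf1⟩ := h1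
  obtain ⟨M2, hf2⟩ := h2
  obtain ⟨Mσ, hσ, htfire⟩ := Net.fires_split hf1
  obtain ⟨Mτ, hσ', hρ⟩ := Net.fires_split hf2
  obtain rfl : Mσ = Mτ := Net.fires_det hσ hσ'
  have ht' : N.enabled t Mσ := by cases htfire with | cons h _ => exact h
  obtain ⟨he, hf⟩ := Net.key hbcf t ρ Mσ M2 ⟨σ, hσ⟩ ht' hρ ht
  refine ⟨N.fire M2 t, ?_, ?_⟩
  · exact Net.fires_append hσ (Net.Fires.cons ht' hf)
  · rw [List.append_assoc]
    exact Net.fires_append hσ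
      (Net.fires_append hρ (Net.Fires.cons he (Net.Fires.nil _)))
end

section
/- In a binary-conflict-free net, the set of all ↔*-equivalence classes of firing sequences is directed under the prefix order on partial FS-runs: for any firing sequences σ, ρ there exists a firing sequence ν such that [σ] ≤ [ν] and [ρ] ≤ [ν]. -/
namespace Net

variable {S T : Type}

/- ### Auxiliary lemmas -/

lemma Fires.append {N : Net S T} {M M' M'' : S → ℕ} {σ τ : List T}
    (h : N.Fires M σ M') (h' : N.Fires M' τ M'') : N.Fires M (σ ++ τ) M'' := by
  induction h with
  | nil => simpa
  | cons he _ ih => exact Fires.cons he (ih h')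

lemma Fires.det {N : Net S T} {M M1 M2 : S → ℕ} {σ : List T}
    (h : N.Fires M σ M1) (h' : N.Fires M σ M2) : M1 = M2 := by
  induction h with
  | nil => cases h'; rfl
  | cons he _ ih => cases h' with | cons _ h2 => exact ih h2

lemma Fires.split {N : Net S T} {M M'' : S → ℕ} {σ τ : List T}
    (h : N.Fires M (σ ++ τ) M'') : ∃ M', N.Fires M σ M' ∧ N.Fires M' τ M'' := by
  induction σ generalizing M with
  | nil => exact ⟨M, Fires.nil M, h⟩
  | cons t σ ih =>
    cases h with
    | cons he h2 =>
      obtain ⟨M', h3, h4⟩ := ih h2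
      exact ⟨M', Fires.cons he h3, h4⟩

lemma enabledPair.symm {N : Net S T} {t u : T} {M : S → ℕ}
    (h : N.enabledPair t u M) : N.enabledPair u t M := by
  intro s; have := h s; omega

lemma enabledPair.left {N : Net S T} {t u : T} {M : S → ℕ}
    (h : N.enabledPair t u M) : N.enabled t M := by
  intro s; have := h s; omega

lemma enabledPair.right_after {N : Net S T} {t u : T} {M : S → ℕ}
    (h : N.enabledPair t u M) : N.enabled u (N.fire M t) := by
  intro s; have := h s; simp [fire]; omega

lemma fire_comm {N : Net S T} {t u : T} {M : S → ℕ} (h : N.enabledPair t u M) :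
    N.fire (N.fire M t) u = N.fire (N.fire M u) t := by
  funext s; have := h s; simp [fire]; omega

/-- A pair-swap preserves the reached marking. -/
lemma Fires.swap {N : Net S T} {t u : T} {M Me : S → ℕ} {σ₂ : List T}
    (hp : N.enabledPair t u M) (h : N.Fires M (t :: u :: σ₂) Me) :
    N.Fires M (u :: t :: σ₂) Me := by
  cases h with
  | cons h1 h2 =>
    cases h2 with
    | cons h3 h4 =>
      exact Fires.cons hp.symm.left
        (Fires.cons hp.symm.right_after (by rwa [← fire_comm hp]))

lemma Adjacent.marking {N : Net S T} {σ ρ : List T} {Me : S → ℕ}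
    (h : N.Adjacent σ ρ) (hf : N.Fires N.M0 σ Me) : N.Fires N.M0 ρ Me := by
  obtain ⟨-, -, σ₁, t, u, σ₂, Mw, rfl, rfl, hγ, hp⟩ := h
  obtain ⟨M', h1, h2⟩ := Fires.split hf
  cases Fires.det hγ h1
  exact Fires.append hγ (Fires.swap hp h2)

lemma AdjStar.marking {N : Net S T} {σ ρ : List T} {Me : S → ℕ}
    (h : N.AdjStar σ ρ) (hf : N.Fires N.M0 σ Me) : N.Fires N.M0 ρ Me := by
  induction h with
  | refl => exact hf
  | tail _ hadj ih => exact hadj.marking ih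

lemma Adjacent.symm {N : Net S T} {σ ρ : List T} (h : N.Adjacent σ ρ) :
    N.Adjacent ρ σ := by
  obtain ⟨h1, h2, σ₁, t, u, σ₂, Mw, e1, e2, hγ, hp⟩ := h
  exact ⟨h2, h1, σ₁, u, t, σ₂, Mw, e2, e1, hγ, hp.symm⟩

lemma AdjStar.symm {N : Net S T} {σ ρ : List T} (h : N.AdjStar σ ρ) :
    N.AdjStar ρ σ := by
  induction h with
  | refl => exact Relation.ReflTransGen.refl
  | tail _ hadj ih =>
    exact Relation.ReflTransGen.trans (Relation.ReflTransGen.single hadj.symm) ih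

lemma Adjacent.append_right {N : Net S T} {σ ρ c : List T} {Me Mc : S → ℕ}
    (h : N.Adjacent σ ρ) (hf : N.Fires N.M0 σ Me) (hc : N.Fires Me c Mc) :
    N.Adjacent (σ ++ c) (ρ ++ c) := by
  have hρ : N.Fires N.M0 ρ Me := h.marking hf
  obtain ⟨-, -, σ₁, t, u, σ₂, Mw, rfl, rfl, hγ, hp⟩ := h
  refine ⟨⟨Mc, Fires.append hf hc⟩, ⟨Mc, Fires.append hρ hc⟩,
    σ₁, t, u, σ₂ ++ c, Mw, by simp, by simp, hγ, hp⟩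

lemma AdjStar.append_right {N : Net S T} {σ ρ c : List T} {Me Mc : S → ℕ}
    (h : N.AdjStar σ ρ) (hf : N.Fires N.M0 σ Me) (hc : N.Fires Me c Mc) :
    N.AdjStar (σ ++ c) (ρ ++ c) := by
  induction h with
  | refl => exact Relation.ReflTransGen.refl
  | tail h1 hadj ih =>
    exact Relation.ReflTransGen.tail ih
      (hadj.append_right (AdjStar.marking h1 hf) hc)

/-- Keller's lemma: residuals exist and the two completions are exchange-equivalent. -/
lemma keller (N : Net S T) (hbcf : N.bcf) :
    ∀ n σ ρ (γ : List T) (M M1 M2 : S → ℕ), σ.length + ρ.length ≤ n →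
      N.Fires N.M0 γ M → N.Fires M σ M1 → N.Fires M ρ M2 →
      ∃ σ' ρ' M3, N.Fires M1 σ' M3 ∧ N.Fires M2 ρ' M3 ∧
        σ'.length ≤ ρ.length ∧ ρ'.length ≤ σ.length ∧
        N.AdjStar (γ ++ σ ++ σ') (γ ++ ρ ++ ρ') := by
  intro n
  induction n with
  | zero =>
    intro σ ρ γ M M1 M2 hn hγ h1 h2
    have : σ = [] := by cases σ <;> simp_all
    subst this
    have : ρ = [] := by cases ρ <;> simp_all
    subst this
    cases h1; cases h2
    exact ⟨[], [], M, Fires.nil M, Fires.nil M, by simp, by simp,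
      Relation.ReflTransGen.refl⟩
  | succ n ih =>
    intro σ ρ γ M M1 M2 hn hγ h1 h2
    match σ, h1 with
    | [], h1 =>
      cases h1
      exact ⟨ρ, [], M2, h2, Fires.nil M2, by simp, by simp,
        by simp; exact Relation.ReflTransGen.refl⟩
    | t :: σ₁, Fires.cons ht h1' =>
      match ρ, h2 with
      | [], h2 =>
        cases h2
        exact ⟨[], t :: σ₁, M1, Fires.nil M1, Fires.cons ht h1', by simp, by simp,
          by simp; exact Relation.ReflTransGen.refl⟩
      | u :: ρ₁, Fires.cons hu h2' =>
        by_cases htu : t = u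
        · subst htu
          obtain ⟨σ', ρ', M3, f1, f2, l1, l2, hadj⟩ :=
            ih σ₁ ρ₁ (γ ++ [t]) (N.fire M t) M1 M2 (by simp at hn ⊢; omega)
              (Fires.append hγ (Fires.cons ht (Fires.nil _))) h1' h2'
          refine ⟨σ', ρ', M3, f1, f2, by simpa using Nat.le_succ_of_le l1,
            by simpa using Nat.le_succ_of_le l2, ?_⟩
          simpa using hadj
        · -- t ≠ u : use bcf
          have hp : N.enabledPair t u M := hbcf M ⟨γ, hγ⟩ t u htu ht hu
          set Mt := N.fire M t with hMt
          set Mu := N.fire M u with hMu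
          have hut : N.enabled u Mt := hp.right_after
          have htu' : N.enabled t Mu := hp.symm.right_after
          have hcomm : N.fire Mt u = N.fire Mu t := fire_comm hp
          have hγt : N.Fires N.M0 (γ ++ [t]) Mt :=
            Fires.append hγ (Fires.cons ht (Fires.nil _))
          have hγu : N.Fires N.M0 (γ ++ [u]) Mu :=
            Fires.append hγ (Fires.cons hu (Fires.nil _))
          -- IH₁: σ₁ vs [u] from Mt
          obtain ⟨a, b, M4, fa, fb, la, lb, hadj1⟩ :=
            ih σ₁ [u] (γ ++ [t]) Mt M1 (N.fire Mt u) (by simp at hn ⊢; omega)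
              hγt h1' (Fires.cons hut (Fires.nil _))
          -- from Mu we can fire t :: b to M4
          have hTb : N.Fires Mu (t :: b) M4 := Fires.cons htu' (by rwa [← hcomm])
          -- IH₂ : (t::b) vs ρ₁ from Mu
          obtain ⟨c, d, M5, fc, fd, lc, ld, hadj2⟩ :=
            ih (t :: b) ρ₁ (γ ++ [u]) Mu M4 M2 (by simp at hn lb ⊢; omega)
              hγu hTb h2'
          refine ⟨a ++ c, d, M5, Fires.append fa fc, fd, ?_, ?_, ?_⟩
          · simp at la lc ⊢; omega
          · simp at ld lb ⊢; omega
          · -- chain of AdjStar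
            have step1 : N.AdjStar (γ ++ (t :: σ₁) ++ (a ++ c))
                ((γ ++ [t] ++ [u] ++ b) ++ c) := by
              have hfs : N.Fires N.M0 (γ ++ [t] ++ σ₁ ++ a) M4 :=
                Fires.append (Fires.append hγt h1') fa
              have := hadj1.append_right hfs fc
              simpa using this
            have step2 : N.Adjacent ((γ ++ [t] ++ [u] ++ b) ++ c)
                ((γ ++ [u] ++ [t] ++ b) ++ c) := by
              have hfub : N.Fires N.M0 (γ ++ [u] ++ [t] ++ b) M4 := by
                have : N.Fires N.M0 ((γ ++ [u]) ++ (t :: b)) M4 :=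
                  Fires.append hγu hTb
                simpa using this
              refine ⟨⟨M5, ?_⟩, ⟨M5, Fires.append hfub fc⟩,
                γ, t, u, b ++ c, M, by simp, by simp, hγ, hp⟩
              have hftb : N.Fires N.M0 (γ ++ [t] ++ [u] ++ b) M4 := by
                have : N.Fires N.M0 ((γ ++ [t]) ++ (u :: b)) M4 :=
                  Fires.append hγt (Fires.cons hut fb)
                simpa using this
              exact Fires.append hftb fc
            have step3 : N.AdjStar ((γ ++ [u]) ++ (t :: b) ++ c)
                ((γ ++ [u]) ++ ρ₁ ++ d) := hadj2
            have step12 : N.AdjStar (γ ++ (t :: σ₁) ++ (a ++ c))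
                ((γ ++ [u] ++ [t] ++ b) ++ c) :=
              Relation.ReflTransGen.tail step1 step2
            have heq : (γ ++ [u] ++ [t] ++ b) ++ c = (γ ++ [u]) ++ (t :: b) ++ c := by
              simp
            have heq2 : (γ ++ [u]) ++ ρ₁ ++ d = γ ++ (u :: ρ₁) ++ d := by simp
            rw [← heq2]
            exact Relation.ReflTransGen.trans (heq ▸ step12) step3

end Net

/-- in a binary-conflict-free net the partial FS-runs are directed:
for any firing sequences `σ, ρ` there is a firing sequence `ν` with `[σ] ≤ [ν]` and
`[ρ] ≤ [ν]`. -/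
theorem stmt12 {S T : Type} (N : Net S T) (hbcf : N.bcf) (σ ρ : List T)
    (hσ : N.FS σ) (hρ : N.FS ρ) :
    ∃ ν, N.FS ν ∧ N.runLe σ ν ∧ N.runLe ρ ν := by
  obtain ⟨M1, h1⟩ := hσ
  obtain ⟨M2, h2⟩ := hρ
  obtain ⟨σ', ρ', M3, f1, f2, -, -, hadj⟩ :=
    N.keller hbcf (σ.length + ρ.length) σ ρ [] N.M0 M1 M2 le_rfl
      (Net.Fires.nil _) h1 h2
  simp only [List.nil_append] at hadj
  refine ⟨σ ++ σ', ⟨M3, Net.Fires.append h1 f1⟩,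
    ⟨σ ++ σ', List.prefix_append σ σ', Relation.ReflTransGen.refl⟩,
    ⟨ρ ++ ρ', List.prefix_append ρ ρ', hadj.symm⟩⟩
end

section
/- There is an order-embedding from finite BD-processes into BD-runs: mapping a finite BD-process [P] to its set of prefixes ↓{[P'] : P' ≤ P finite} is injective, the image is a BD-run (non-empty, prefix-closed, directed) whose largest element is [P], and [P] ≤ [Q] iff the associated BD-runs are included in one another. -/
/-- The data of an occurrence net: a set of places (conditions) `PS`, a set of
transitions (events) `PT`, and the flow relation (arc weights are at most 1 in
occurrence nets, so the flow is a relation). -/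
structure OccNet (PS PT : Type) where
  flowST : PS → PT → Prop
  flowTS : PT → PS → Prop

namespace OccNet

variable {PS PT : Type}

/-- The flow relation as a relation on `PS ⊕ PT`. -/
def edge (O : OccNet PS PT) (x y : PS ⊕ PT) : Prop :=
  match x, y with
  | Sum.inl s, Sum.inr t => O.flowST s t
  | Sum.inr t, Sum.inl s => O.flowTS t s
  | _, _ => False

/-- The causal order `ℱ⁺` : transitive closure of the flow relation. -/
def causal (O : OccNet PS PT) : (PS ⊕ PT) → (PS ⊕ PT) → Prop :=
  Relation.TransGen O.edge

/-- Occurrence net axioms: unbranched places (`|•s| ≤ 1 ≥ |s•|`), acyclicity,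
finite causal pasts. -/
def IsOccNet (O : OccNet PS PT) : Prop :=
  (∀ s : PS, ∀ t t' : PT, O.flowTS t s → O.flowTS t' s → t = t') ∧
  (∀ s : PS, ∀ t t' : PT, O.flowST s t → O.flowST s t' → t = t') ∧
  (∀ x, ¬ O.causal x x) ∧
  (∀ u : PT, {x | O.causal x (Sum.inr u)}.Finite)

open Classical in
/-- The canonical initial marking of an occurrence net: 1 on places without a
pre-transition, 0 elsewhere. -/
noncomputable def M0 (O : OccNet PS PT) : PS → ℕ :=
  fun s => if ∃ t, O.flowTS t s then 0 else 1

open Classical in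
/-- An occurrence net viewed as a net, for the standard token firing rule. -/
noncomputable def toNet (O : OccNet PS PT) : Net PS PT where
  pre := fun t s => if O.flowST s t then 1 else 0
  post := fun t s => if O.flowTS t s then 1 else 0
  M0 := O.M0

end OccNet

/-- The data of a GR-process of a net `N`: an occurrence net over places `PS` and
transitions `PT`, together with the mapping `π` to the places and transitions of `N`. -/
structure PreProcess (S T PS PT : Type) (N : Net S T) where
  net : OccNet PS PT
  πS : PS → S
  πT : PT → T

namespace PreProcess

variable {S T PS PT : Type} {N : Net S T}

/-- The GR-process axioms: the underlying net is an occurrence net, `π(ℳ₀) = M₀`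
(counting the places without pre-transition mapped to each place of `N`), and `π`
preserves the pre- and post-multiplicities of transitions. -/
def IsProcess (P : PreProcess S T PS PT N) : Prop :=
  P.net.IsOccNet ∧
  (∀ s : S, {p : PS | P.πS p = s ∧ ¬ ∃ t, P.net.flowTS t p}.Finite ∧
    {p : PS | P.πS p = s ∧ ¬ ∃ t, P.net.flowTS t p}.ncard = N.M0 s) ∧
  (∀ t : PT, ∀ s : S,
    {p : PS | P.πS p = s ∧ P.net.flowST p t}.Finite ∧
    {p : PS | P.πS p = s ∧ P.net.flowST p t}.ncard = N.pre (P.πT t) s ∧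
    {p : PS | P.πS p = s ∧ P.net.flowTS t p}.Finite ∧
    {p : PS | P.πS p = s ∧ P.net.flowTS t p}.ncard = N.post (P.πT t) s)

end PreProcess

namespace PreProcess

variable {S T PS PT : Type} {N : Net S T}

/-- `swap(P,p,q)`: exchange the outgoing arcs of the places `p` and `q`. -/
def swap (P : PreProcess S T PS PT N) (p q : PS) : PreProcess S T PS PT N where
  net :=
    { flowST := fun x t =>
        (x = p ∧ P.net.flowST q t) ∨ (x = q ∧ P.net.flowST p t) ∨
        (x ≠ p ∧ x ≠ q ∧ P.net.flowST x t)
      flowTS := P.net.flowTS }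
  πS := P.πS
  πT := P.πT

/-- An isomorphism of processes: a net isomorphism respecting the process mappings. -/
structure ProcIso {QS QT : Type} (P : PreProcess S T PS PT N)
    (Q : PreProcess S T QS QT N) where
  φS : PS ≃ QS
  φT : PT ≃ QT
  hST : ∀ p t, Q.net.flowST (φS p) (φT t) ↔ P.net.flowST p t
  hTS : ∀ t p, Q.net.flowTS (φT t) (φS p) ↔ P.net.flowTS t p
  hπS : ∀ p, Q.πS (φS p) = P.πS p
  hπT : ∀ t, Q.πT (φT t) = P.πT t

/-- One-step swapping equivalence `P ≈ₛ Q`: `swap(P,p,q)` is isomorphic to `Q` for some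
causally unrelated places `p, q` with `π(p) = π(q)`. -/
def SwapEquiv {QS QT : Type} (P : PreProcess S T PS PT N)
    (Q : PreProcess S T QS QT N) : Prop :=
  ∃ p q : PS,
    ¬ P.net.causal (Sum.inl p) (Sum.inl q) ∧ ¬ P.net.causal (Sum.inl q) (Sum.inl p) ∧
    P.πS p = P.πS q ∧ Nonempty (ProcIso (P.swap p q) Q)

end PreProcess

namespace PreProcess

variable {S T : Type} {N : Net S T}

/-- `P` is (isomorphic to) a prefix of `Q` (Definition of prefix, up to the naming of
places and transitions): injections of the places and transitions of `P` into those of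
`Q` reflecting the flow relation and the mappings, such that the initial markings
coincide (all initial places of `Q` are in the image, and images of initial places are
initial). -/
def IsPrefixEmbed {PS PT QS QT : Type} (P : PreProcess S T PS PT N)
    (Q : PreProcess S T QS QT N) : Prop :=
  ∃ (φS : PS → QS) (φT : PT → QT),
    Function.Injective φS ∧ Function.Injective φT ∧
    (∀ p t, Q.net.flowST (φS p) (φT t) ↔ P.net.flowST p t) ∧
    (∀ t p, Q.net.flowTS (φT t) (φS p) ↔ P.net.flowTS t p) ∧
    (∀ p, Q.πS (φS p) = P.πS p) ∧ (∀ t, Q.πT (φT t) = P.πT t) ∧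
    (∀ p : QS, (¬ ∃ t, Q.net.flowTS t p) → ∃ p₀, φS p₀ = p) ∧
    (∀ p₀ : PS, (¬ ∃ t, P.net.flowTS t p₀) → ¬ ∃ t, Q.net.flowTS t (φS p₀))

end PreProcess

/-- A GR-process of `N`, bundled with its types of places and transitions. -/
structure ProcBundle (S T : Type) (N : Net S T) where
  PS : Type
  PT : Type
  proc : PreProcess S T PS PT N
  isProc : proc.IsProcess

namespace ProcBundle

variable {S T : Type} {N : Net S T}

/-- One-step swapping equivalence `≈ₛ` on bundled processes. -/
def SwapB (P Q : ProcBundle S T N) : Prop := P.proc.SwapEquiv Q.proc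

/-- `≈ₛ*`: the reflexive-transitive closure of one-step swapping equivalence. -/
def SwapStarB : ProcBundle S T N → ProcBundle S T N → Prop :=
  Relation.ReflTransGen SwapB

/-- The prefix relation `≤` on bundled processes. -/
def PrefixB (P Q : ProcBundle S T N) : Prop := P.proc.IsPrefixEmbed Q.proc

/-- The prefix relation lifted to BD-processes (stated on representatives):
`[P] ≤ [Q]` iff `P ≈ₛ* P₁ ≤ Q₁ ≈ₛ* Q` for some `P₁, Q₁`. -/
def BDleB (P Q : ProcBundle S T N) : Prop :=
  ∃ P₁ Q₁ : ProcBundle S T N, SwapStarB P P₁ ∧ PrefixB P₁ Q₁ ∧ SwapStarB Q₁ Q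

/-- A process is finite iff its set of transitions is finite. -/
def FiniteB (P : ProcBundle S T N) : Prop := Finite P.PT

/-- `BD(P) = ↓{[P'] : P' ≤ P, P' finite}`: the set of finite BD-processes below a
finite prefix of `P` (a set of representatives closed under `≈ₛ*`). -/
def BDify (P : ProcBundle S T N) : Set (ProcBundle S T N) :=
  {Q | FiniteB Q ∧ ∃ P' : ProcBundle S T N, FiniteB P' ∧ PrefixB P' P ∧ BDleB Q P'}

/-- A BD-run: a non-empty set of finite BD-processes (represented as a set of finite
processes closed under `≈ₛ*`) that is prefix-closed and directed under `≤`. -/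
def IsBDRun (R : Set (ProcBundle S T N)) : Prop :=
  R.Nonempty ∧ (∀ P ∈ R, FiniteB P) ∧
  (∀ P ∈ R, ∀ Q, FiniteB Q → SwapStarB P Q → Q ∈ R) ∧
  (∀ Q ∈ R, ∀ P, FiniteB P → BDleB P Q → P ∈ R) ∧
  (∀ P ∈ R, ∀ Q ∈ R, ∃ U ∈ R, BDleB P U ∧ BDleB Q U)

end ProcBundle

section Stmt19Aux

open ProcBundle PreProcess Relation

variable {S T : Type} {N : Net S T}

lemma prefixB_refl (P : ProcBundle S T N) : PrefixB P P :=
  ⟨id, id, fun _ _ h => h, fun _ _ h => h, fun _ _ => Iff.rfl, fun _ _ => Iff.rfl,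
   fun _ => rfl, fun _ => rfl, fun p _ => ⟨p, rfl⟩, fun _ h => h⟩

lemma prefixB_trans {P Q R : ProcBundle S T N} (h1 : PrefixB P Q) (h2 : PrefixB Q R) :
    PrefixB P R := by
  obtain ⟨f, g, hf, hg, hST, hTS, hπS, hπT, hsurj, hinit⟩ := h1
  obtain ⟨f', g', hf', hg', hST', hTS', hπS', hπT', hsurj', hinit'⟩ := h2
  refine ⟨f' ∘ f, g' ∘ g, hf'.comp hf, hg'.comp hg,
    fun p t => (hST' _ _).trans (hST _ _), fun t p => (hTS' _ _).trans (hTS _ _),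
    fun p => (hπS' _).trans (hπS p), fun t => (hπT' _).trans (hπT t), ?_, ?_⟩
  · intro p hp
    obtain ⟨qq, rfl⟩ := hsurj' p hp
    have hq : ¬ ∃ t, Q.proc.net.flowTS t qq := by
      rintro ⟨t, ht⟩
      exact hp ⟨g' t, (hTS' t qq).mpr ht⟩
    obtain ⟨p₀, rfl⟩ := hsurj qq hq
    exact ⟨p₀, rfl⟩
  · intro p₀ h0
    exact hinit' _ (hinit _ h0)

lemma bdleB_refl (P : ProcBundle S T N) : BDleB P P :=
  ⟨P, P, .refl, prefixB_refl P, .refl⟩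

lemma bdleB_of_swapStar {P Q : ProcBundle S T N} (h : SwapStarB P Q) : BDleB P Q :=
  ⟨Q, Q, h, prefixB_refl Q, .refl⟩

lemma bdleB_of_prefix {P Q : ProcBundle S T N} (h : PrefixB P Q) : BDleB P Q :=
  ⟨P, Q, .refl, h, .refl⟩

lemma bdleB_trans
    (hexch : ∀ P Q Q' : ProcBundle S T N, SwapStarB P Q → PrefixB Q Q' →
      ∃ P' : ProcBundle S T N, PrefixB P P' ∧ SwapStarB P' Q')
    {P Q R : ProcBundle S T N} (h1 : BDleB P Q) (h2 : BDleB Q R) : BDleB P R := by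
  obtain ⟨P₁, Q₁, hPP₁, hpre1, hQ₁Q⟩ := h1
  obtain ⟨Q₂, R₁, hQQ₂, hpre2, hR₁R⟩ := h2
  obtain ⟨P', hpre, hsw⟩ := hexch Q₁ Q₂ R₁ (hQ₁Q.trans hQQ₂) hpre2
  exact ⟨P₁, P', hPP₁, prefixB_trans hpre1 hpre, hsw.trans hR₁R⟩

open Classical in
noncomputable def swapFn {PS : Type} (p q x : PS) : PS :=
  if x = p then q else if x = q then p else x

lemma swapFn_left {PS : Type} (p q : PS) : swapFn p q p = q := by
  unfold swapFn; simp

lemma swapFn_right {PS : Type} (p q : PS) : swapFn p q q = p := by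
  unfold swapFn
  split_ifs with h h2
  · exact h
  · rfl
  · exact absurd rfl h2

lemma swapFn_other {PS : Type} {p q x : PS} (h1 : x ≠ p) (h2 : x ≠ q) :
    swapFn p q x = x := by
  unfold swapFn; simp [h1, h2]

lemma swap_flowST_iff {PS PT : Type} (P : PreProcess S T PS PT N) (p q x : PS) (t : PT) :
    (P.swap p q).net.flowST x t ↔ P.net.flowST (swapFn p q x) t := by
  show (x = p ∧ P.net.flowST q t) ∨ (x = q ∧ P.net.flowST p t) ∨
      (x ≠ p ∧ x ≠ q ∧ P.net.flowST x t) ↔ _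
  by_cases h1 : x = p
  · subst h1
    rw [swapFn_left]
    constructor
    · rintro (⟨-, h⟩ | ⟨rfl, h⟩ | ⟨h, -, -⟩)
      · exact h
      · exact h
      · exact absurd rfl h
    · exact fun h => Or.inl ⟨rfl, h⟩
  · by_cases h2 : x = q
    · subst h2
      rw [swapFn_right]
      constructor
      · rintro (⟨h, -⟩ | ⟨-, h⟩ | ⟨-, h, -⟩)
        · exact absurd h h1
        · exact h
        · exact absurd rfl h
      · exact fun h => Or.inr (Or.inl ⟨rfl, h⟩)
    · rw [swapFn_other h1 h2]
      constructor
      · rintro (⟨h, -⟩ | ⟨h, -⟩ | ⟨-, -, h⟩)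
        · exact absurd h h1
        · exact absurd h h2
        · exact h
      · exact fun h => Or.inr (Or.inr ⟨h1, h2, h⟩)

lemma swap_edge_iff {PS PT : Type} (P : PreProcess S T PS PT N) (p q : PS)
    (x y : PS ⊕ PT) :
    (P.swap p q).net.edge x y ↔ P.net.edge (Sum.map (swapFn p q) id x) y := by
  cases x with
  | inl s =>
    cases y with
    | inl s' => exact Iff.rfl
    | inr t => exact swap_flowST_iff P p q s t
  | inr t =>
    cases y with
    | inl s => exact Iff.rfl
    | inr t' => exact Iff.rfl

lemma swap_causal_aux {PS PT : Type} {P : PreProcess S T PS PT N} {p q : PS}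
    (hac : ∀ x, ¬ P.net.causal x x)
    (hpq : ¬ P.net.causal (.inl p) (.inl q)) (hqp : ¬ P.net.causal (.inl q) (.inl p))
    {x y : PS ⊕ PT} (h : (P.swap p q).net.causal x y) :
    P.net.causal (Sum.map (swapFn p q) id x) y ∨
      (P.net.causal (Sum.map (swapFn p q) id x) (.inl p) ∧ P.net.causal (.inl q) y) ∨
      (P.net.causal (Sum.map (swapFn p q) id x) (.inl q) ∧ P.net.causal (.inl p) y) := by
  have h' : Relation.TransGen ((P.swap p q).net.edge) x y := h
  induction h' using Relation.TransGen.head_induction_on with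
  | single hb => exact Or.inl (Relation.TransGen.single ((swap_edge_iff P p q _ _).mp hb))
  | head h1 h2 IH =>
    rename_i a c
    have he : P.net.edge (Sum.map (swapFn p q) id a) c := (swap_edge_iff P p q _ _).mp h1
    by_cases hcp : c = Sum.inl p
    · subst hcp
      have hap : P.net.causal (Sum.map (swapFn p q) id a) (.inl p) :=
        Relation.TransGen.single he
      rw [show (Sum.map (swapFn p q) id (Sum.inl p) : PS ⊕ PT) = Sum.inl q by
        simp [swapFn_left]] at IH
      rcases IH h2 with hc | ⟨hc, -⟩ | ⟨hc, -⟩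
      · exact Or.inr (Or.inl ⟨hap, hc⟩)
      · exact absurd hc hqp
      · exact absurd hc (hac _)
    · by_cases hcq : c = Sum.inl q
      · subst hcq
        have haq : P.net.causal (Sum.map (swapFn p q) id a) (.inl q) :=
          Relation.TransGen.single he
        rw [show (Sum.map (swapFn p q) id (Sum.inl q) : PS ⊕ PT) = Sum.inl p by
          simp [swapFn_right]] at IH
        rcases IH h2 with hc | ⟨hc, -⟩ | ⟨hc, -⟩
        · exact Or.inr (Or.inr ⟨haq, hc⟩)
        · exact absurd hc (hac _)
        · exact absurd hc hpq
      · have hcc : Sum.map (swapFn p q) id c = c := by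
          cases c with
          | inl s =>
            have hsp : s ≠ p := fun h => hcp (by rw [h])
            have hsq : s ≠ q := fun h => hcq (by rw [h])
            simp [swapFn_other hsp hsq]
          | inr t => rfl
        rw [hcc] at IH
        rcases IH h2 with hc | ⟨hc, hc'⟩ | ⟨hc, hc'⟩
        · exact Or.inl (Relation.TransGen.head he hc)
        · exact Or.inr (Or.inl ⟨Relation.TransGen.head he hc, hc'⟩)
        · exact Or.inr (Or.inr ⟨Relation.TransGen.head he hc, hc'⟩)

lemma swapB_symm {P Q : ProcBundle S T N} (h : SwapB P Q) : SwapB Q P := by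
  obtain ⟨p, q, hpq, hqp, hπ, ⟨φ⟩⟩ := h
  have hac : ∀ x, ¬ P.proc.net.causal x x := P.isProc.1.2.2.1
  have hkey : ∀ x : Q.PS,
      swapFn p q (φ.φS.symm (swapFn (φ.φS p) (φ.φS q) x)) = φ.φS.symm x := by
    intro x
    by_cases h1 : x = φ.φS p
    · subst h1
      simp [swapFn_left, swapFn_right]
    · by_cases h2 : x = φ.φS q
      · subst h2
        have : swapFn (φ.φS p) (φ.φS q) (φ.φS q) = φ.φS p := swapFn_right _ _
        rw [this]
        simp [swapFn_left]
      · rw [swapFn_other h1 h2]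
        exact swapFn_other (fun h => h1 ((Equiv.symm_apply_eq φ.φS).mp h))
          (fun h => h2 ((Equiv.symm_apply_eq φ.φS).mp h))
  -- transport of causality along the iso into the swapped net
  have hedge : ∀ a b, Q.proc.net.edge a b →
      (P.proc.swap p q).net.edge (Sum.map φ.φS.symm φ.φT.symm a)
        (Sum.map φ.φS.symm φ.φT.symm b) := by
    rintro (s | t) (s' | t') hb
    · exact hb.elim
    · exact (φ.hST _ _).mp (by simpa using (show Q.proc.net.flowST s t' from hb))
    · exact (φ.hTS _ _).mp (by simpa using (show Q.proc.net.flowTS t s' from hb))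
    · exact hb.elim
  have hcaus : ∀ a b, Q.proc.net.causal a b →
      (P.proc.swap p q).net.causal (Sum.map φ.φS.symm φ.φT.symm a)
        (Sum.map φ.φS.symm φ.φT.symm b) := by
    intro a b hb
    exact Relation.TransGen.lift _ (fun x y h => hedge x y h) a b hb
  refine ⟨φ.φS p, φ.φS q, ?_, ?_, ?_, ⟨?_⟩⟩
  · intro hc
    have h2 := hcaus _ _ hc
    simp only [Sum.map_inl, Equiv.symm_apply_apply] at h2
    rcases swap_causal_aux hac hpq hqp h2 with hc' | ⟨hc', -⟩ | ⟨hc', -⟩ <;>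
      rw [show (Sum.map (swapFn p q) id (Sum.inl p) : P.PS ⊕ P.PT) = Sum.inl q by
        simp [swapFn_left]] at hc'
    · exact hac _ hc'
    · exact hqp hc'
    · exact hac _ hc'
  · intro hc
    have h2 := hcaus _ _ hc
    simp only [Sum.map_inl, Equiv.symm_apply_apply] at h2
    rcases swap_causal_aux hac hpq hqp h2 with hc' | ⟨hc', -⟩ | ⟨hc', -⟩ <;>
      rw [show (Sum.map (swapFn p q) id (Sum.inl q) : P.PS ⊕ P.PT) = Sum.inl p by
        simp [swapFn_right]] at hc'
    · exact hac _ hc'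
    · exact hac _ hc'
    · exact hpq hc'
  · exact (φ.hπS p).trans (hπ.trans (φ.hπS q).symm)
  · refine ⟨φ.φS.symm, φ.φT.symm, ?_, ?_, ?_, ?_⟩
    · intro x t
      have e1 := swap_flowST_iff Q.proc (φ.φS p) (φ.φS q) x t
      have e2 : Q.proc.net.flowST (swapFn (φ.φS p) (φ.φS q) x) t ↔
          (P.proc.swap p q).net.flowST (φ.φS.symm (swapFn (φ.φS p) (φ.φS q) x))
            (φ.φT.symm t) := by
        simpa using φ.hST (φ.φS.symm (swapFn (φ.φS p) (φ.φS q) x)) (φ.φT.symm t)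
      have e3 : (P.proc.swap p q).net.flowST (φ.φS.symm (swapFn (φ.φS p) (φ.φS q) x))
          (φ.φT.symm t) ↔ P.proc.net.flowST (φ.φS.symm x) (φ.φT.symm t) := by
        rw [swap_flowST_iff P.proc, hkey x]
      exact e3.symm.trans (e2.symm.trans e1.symm)
    · intro t x
      exact ((φ.hTS (φ.φT.symm t) (φ.φS.symm x)).symm).trans
        (by simp only [Equiv.apply_symm_apply]; exact Iff.rfl)
    · intro x
      exact ((φ.hπS (φ.φS.symm x)).symm).trans
        (by simp only [Equiv.apply_symm_apply]; rfl)
    · intro t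
      exact ((φ.hπT (φ.φT.symm t)).symm).trans
        (by simp only [Equiv.apply_symm_apply]; rfl)

lemma swapStarB_symm {P Q : ProcBundle S T N} (h : SwapStarB P Q) : SwapStarB Q P := by
  induction h with
  | refl => exact .refl
  | tail h1 h2 ih => exact Relation.ReflTransGen.head (swapB_symm h2) ih

end Stmt19Aux

open ProcBundle in
/-- there is an order-embedding from finite BD-processes into BD-runs:
mapping a finite BD-process `[P]` to `↓{[P'] : P' ≤ P finite}` is injective (on
`≈ₛ*`-classes), its image is a BD-run whose largest element is `[P]`, and
`[P] ≤ [Q]` iff the associated BD-runs are included in one another.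
As given by the context, we assume that `≤` is a partial order on finite BD-processes,
via the exchange property (`hexch`) and antisymmetry (`hanti`). -/
theorem stmt19 {S T : Type} (N : Net S T)
    (hexch : ∀ P Q Q' : ProcBundle S T N, SwapStarB P Q → PrefixB Q Q' →
      ∃ P' : ProcBundle S T N, PrefixB P P' ∧ SwapStarB P' Q')
    (hanti : ∀ P Q : ProcBundle S T N, FiniteB P → FiniteB Q →
      BDleB P Q → BDleB Q P → SwapStarB P Q) :
    (∀ P : ProcBundle S T N, FiniteB P →
      IsBDRun (BDify P) ∧ P ∈ BDify P ∧ (∀ Q ∈ BDify P, BDleB Q P)) ∧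
    (∀ P Q : ProcBundle S T N, FiniteB P → FiniteB Q →
      (BDify P = BDify Q → SwapStarB P Q) ∧ (BDleB P Q ↔ BDify P ⊆ BDify Q)) := by
  have hmem : ∀ P : ProcBundle S T N, FiniteB P → P ∈ BDify P := fun P h =>
    ⟨h, P, h, prefixB_refl P, bdleB_refl P⟩
  have hmax : ∀ P : ProcBundle S T N, ∀ Q ∈ BDify P, BDleB Q P := by
    rintro P Q ⟨-, P', -, hpre, hle⟩
    exact bdleB_trans hexch hle (bdleB_of_prefix hpre)
  constructor
  · intro P hP
    refine ⟨⟨⟨P, hmem P hP⟩, fun Q hQ => hQ.1, ?_, ?_, ?_⟩, hmem P hP, hmax P⟩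
    · rintro Q ⟨-, P', hfP', hpre, hle⟩ Q' hfQ' hsw
      exact ⟨hfQ', P', hfP', hpre,
        bdleB_trans hexch (bdleB_of_swapStar (swapStarB_symm hsw)) hle⟩
    · intro Q hQ P₂ hf2 hle2
      exact ⟨hf2, P, hP, prefixB_refl P, bdleB_trans hexch hle2 (hmax P Q hQ)⟩
    · intro Q1 h1 Q2 h2
      exact ⟨P, hmem P hP, hmax P Q1 h1, hmax P Q2 h2⟩
  · intro P Q hfP hfQ
    refine ⟨?_, ?_, ?_⟩
    · intro heq
      have h1 : BDleB P Q := hmax Q P (heq ▸ hmem P hfP)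
      have h2 : BDleB Q P := hmax P Q (heq.symm ▸ hmem Q hfQ)
      exact hanti P Q hfP hfQ h1 h2
    · rintro hle X ⟨hfX, P', hfP', hpre, hXle⟩
      exact ⟨hfX, Q, hfQ, prefixB_refl Q,
        bdleB_trans hexch (bdleB_trans hexch hXle (bdleB_of_prefix hpre)) hle⟩
    · intro hsub
      exact hmax Q P (hsub (hmem P hfP))
end
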